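/- (Laguerre inversion formula) For any parameter α and integers 0 ≤ j ≤ i: Σ_{k=j}^{i} L_{i-k}^{(-α-i-1)}(-x) · L_{k-j}^{(α+j)}(x) = δ_{ij}. -/
import Mathlib

open Finset Real

/-- Pochhammer symbol (rising factorial) `(a)_k`. -/
noncomputable def poch (a : ℝ) (k : ℕ) : ℝ := (ascPochhammer ℝ k).eval a

/-- Classical Laguerre polynomial `L_n^{(α)}(x)` for arbitrary parameter α. -/
noncomputable def lag (α : ℝ) (n : ℕ) (x : ℝ) : ℝ :=
  ∑ k ∈ Finset.range (n + 1),
    (-1 : ℝ) ^ k * (poch (α + k + 1) (n - k) / (Nat.factorial (n - k))) *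
      x ^ k / (Nat.factorial k)

/-- Classical Jacobi polynomial `P_n^{(α,β)}(x)` for arbitrary parameters. -/
noncomputable def jac (α β : ℝ) (n : ℕ) (x : ℝ) : ℝ :=
  ∑ k ∈ Finset.range (n + 1),
    (poch ((n : ℝ) + α + β + 1) k / (Nat.factorial k)) *
      (poch (α + k + 1) (n - k) / (Nat.factorial (n - k))) * ((x - 1) / 2) ^ k

/-- Generalized binomial coefficient `C(x, k)`. -/
noncomputable def genBinom (x : ℝ) (k : ℕ) : ℝ :=
  (∏ j ∈ Finset.range k, (x - j)) / (Nat.factorial k)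

/-- Charlier polynomial `C_n^{(a)}(x)`. -/
noncomputable def charlier (a : ℝ) (n : ℕ) (x : ℝ) : ℝ :=
  ∑ k ∈ Finset.range (n + 1), genBinom x k * (-a) ^ (n - k) / (Nat.factorial (n - k))

lemma poch_zero (a : ℝ) : poch a 0 = 1 := by simp [poch]

lemma poch_succ (a : ℝ) (n : ℕ) : poch a (n + 1) = poch a n * (a + n) :=
  ascPochhammer_succ_eval n a

lemma vand_choose (u v : ℝ) (N : ℕ) :
    ∑ s ∈ range (N + 1), (N.choose s : ℝ) * (poch v s * poch u (N - s)) = poch (u + v) N := by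
  induction N with
  | zero => simp [poch_zero]
  | succ N ih =>
    have h := Finset.sum_choose_succ_mul (fun s w => poch v s * poch u w) N
    rw [h]
    have h1 : ∀ s ∈ range (N + 1), (N.choose s : ℝ) * (poch v s * poch u (N + 1 - s))
        = (N.choose s : ℝ) * (poch v s * poch u (N - s)) * (u + (N - s : ℕ)) := by
      intro s hs
      rw [mem_range] at hs
      have : N + 1 - s = (N - s) + 1 := by omega
      rw [this, poch_succ]; ring
    have h2 : ∀ s ∈ range (N + 1), (N.choose s : ℝ) * (poch v (s + 1) * poch u (N - s))
        = (N.choose s : ℝ) * (poch v s * poch u (N - s)) * (v + s) := by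
      intro s hs
      rw [poch_succ]; ring
    rw [sum_congr rfl h1, sum_congr rfl h2, ← sum_add_distrib]
    have h3 : ∀ s ∈ range (N + 1),
        (N.choose s : ℝ) * (poch v s * poch u (N - s)) * (u + (N - s : ℕ))
        + (N.choose s : ℝ) * (poch v s * poch u (N - s)) * (v + s)
        = (N.choose s : ℝ) * (poch v s * poch u (N - s)) * (u + v + N) := by
      intro s hs
      rw [mem_range] at hs
      have : ((N - s : ℕ) : ℝ) = (N : ℝ) - s := by
        rw [Nat.cast_sub (by omega)]
      rw [this]; ring
    rw [sum_congr rfl h3, ← sum_mul, ih, poch_succ]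

lemma vand (u v : ℝ) (N : ℕ) :
    ∑ s ∈ range (N + 1), poch u (N - s) / (N - s).factorial * (poch v s / s.factorial)
      = poch (u + v) N / N.factorial := by
  have hN : (N.factorial : ℝ) ≠ 0 := Nat.cast_ne_zero.mpr N.factorial_ne_zero
  rw [eq_div_iff hN, sum_mul, ← vand_choose u v N]
  refine sum_congr rfl fun s hs => ?_
  rw [mem_range] at hs
  have hc : (N.choose s * s.factorial * (N - s).factorial : ℕ) = N.factorial :=
    Nat.choose_mul_factorial_mul_factorial (by omega)
  have hc' : (N.choose s : ℝ) * s.factorial * (N - s).factorial = N.factorial := by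
    exact_mod_cast hc
  have hs' : (s.factorial : ℝ) ≠ 0 := Nat.cast_ne_zero.mpr s.factorial_ne_zero
  have hns : ((N - s).factorial : ℝ) ≠ 0 := Nat.cast_ne_zero.mpr (N - s).factorial_ne_zero
  field_simp
  rw [← hc']; ring

lemma poch_vanish (p m : ℕ) (h : p < m) : poch ((p : ℝ) - m + 1) (m - p) = 0 := by
  obtain ⟨d, hd⟩ : ∃ d, m - p = d + 1 := ⟨m - p - 1, by omega⟩
  have hdm : d + 1 + p = m := by omega
  have : ((p : ℝ) - m + 1) + d = 0 := by
    have : (m : ℝ) = d + 1 + p := by exact_mod_cast hdm.symm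
    rw [this]; ring
  rw [hd, poch_succ, this, mul_zero]

lemma reassoc (m : ℕ) (f g : ℕ → ℕ → ℝ) :
    ∑ t ∈ range (m + 1), (∑ a ∈ range (m - t + 1), f a (m - t - a)) *
        (∑ b ∈ range (t + 1), g b (t - b))
      = ∑ p ∈ range (m + 1), ∑ a ∈ range (p + 1),
          ∑ s ∈ range (m - p + 1), f a (m - p - s) * g (p - a) s := by
  have lhs_eq : ∀ t ∈ range (m + 1),
      (∑ a ∈ range (m - t + 1), f a (m - t - a)) * (∑ b ∈ range (t + 1), g b (t - b))
      = ∑ a ∈ range (m - t + 1), ∑ b ∈ range (t + 1), f a (m - t - a) * g b (t - b) := by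
    intro t _; rw [sum_mul]; exact sum_congr rfl fun a _ => mul_sum _ _ _
  rw [sum_congr rfl lhs_eq]
  rw [show (∑ t ∈ range (m + 1), ∑ a ∈ range (m - t + 1), ∑ b ∈ range (t + 1),
      f a (m - t - a) * g b (t - b)) = ∑ z ∈ (range (m + 1)).sigma
        (fun t => (range (m - t + 1)).sigma fun _ => range (t + 1)),
        f z.2.1 (m - z.1 - z.2.1) * g z.2.2 (z.1 - z.2.2) by
    rw [sum_sigma]; exact sum_congr rfl fun t _ => by rw [sum_sigma]]
  rw [show (∑ p ∈ range (m + 1), ∑ a ∈ range (p + 1), ∑ s ∈ range (m - p + 1),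
      f a (m - p - s) * g (p - a) s) = ∑ z ∈ (range (m + 1)).sigma
        (fun p => (range (p + 1)).sigma fun _ => range (m - p + 1)),
        f z.2.1 (m - z.1 - z.2.2) * g (z.1 - z.2.1) z.2.2 by
    rw [sum_sigma]; exact sum_congr rfl fun p _ => by rw [sum_sigma]]
  refine sum_nbij' (fun z => ⟨z.2.1 + z.2.2, z.2.1, z.1 - z.2.2⟩)
    (fun z => ⟨z.1 - z.2.1 + z.2.2, z.2.1, z.1 - z.2.1⟩) ?_ ?_ ?_ ?_ ?_
  · rintro ⟨t, a, b⟩ hz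
    simp only [mem_sigma, mem_range] at hz ⊢
    omega
  · rintro ⟨p, a, s⟩ hz
    simp only [mem_sigma, mem_range] at hz ⊢
    omega
  · rintro ⟨t, a, b⟩ hz
    simp only [mem_sigma, mem_range] at hz
    dsimp only
    rw [show a + b - a = b by omega, show b + (t - b) = t by omega]
  · rintro ⟨p, a, s⟩ hz
    simp only [mem_sigma, mem_range] at hz
    dsimp only
    rw [show a + (p - a) = p by omega, show p - a + s - (p - a) = s by omega]
  · rintro ⟨t, a, b⟩ hz
    simp only [mem_sigma, mem_range] at hz
    dsimp only
    rw [show m - (a + b) - (t - b) = m - t - a by omega, show a + b - a = b by omega]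

theorem stmt8 (α : ℝ) (i j : ℕ) (hij : j ≤ i) (x : ℝ) :
    ∑ k ∈ Finset.Icc j i, lag (-α - i - 1) (i - k) (-x) * lag (α + j) (k - j) x =
      if i = j then 1 else 0 := by
  set m := i - j with hm
  have him : i = j + m := by omega
  set β : ℝ := -α - i - 1 with hβ
  set γ : ℝ := α + j with hγ
  set f : ℕ → ℕ → ℝ := fun a u =>
    x ^ a / a.factorial * (poch (β + a + 1) u / u.factorial) with hf
  set g : ℕ → ℕ → ℝ := fun b v =>
    (-1 : ℝ) ^ b * x ^ b / b.factorial * (poch (γ + b + 1) v / v.factorial) with hg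
  have hlagf : ∀ n : ℕ, lag β n (-x) = ∑ a ∈ range (n + 1), f a (n - a) := by
    intro n
    unfold lag
    refine sum_congr rfl fun a _ => ?_
    simp only [hf]
    rw [neg_pow]
    have h1 : (-1 : ℝ) ^ a * (-1 : ℝ) ^ a = 1 := by
      rw [← pow_add, ← two_mul, pow_mul, neg_one_sq, one_pow]
    linear_combination (poch (β + a + 1) (n - a) / (((n - a).factorial : ℝ)) * x ^ a /
      ((a.factorial : ℝ))) * h1
  have hlagg : ∀ n : ℕ, lag γ n x = ∑ b ∈ range (n + 1), g b (n - b) := by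
    intro n
    unfold lag
    refine sum_congr rfl fun b _ => ?_
    simp only [hg]
    ring
  rw [← Finset.Ico_add_one_right_eq_Icc, Finset.sum_Ico_eq_sum_range,
    show i + 1 - j = m + 1 by omega]
  have step : ∀ t ∈ range (m + 1),
      lag β (i - (j + t)) (-x) * lag γ (j + t - j) x
      = (∑ a ∈ range (m - t + 1), f a (m - t - a)) * (∑ b ∈ range (t + 1), g b (t - b)) := by
    intro t _
    rw [show i - (j + t) = m - t by omega, show j + t - j = t by omega, hlagf, hlagg]
  rw [sum_congr rfl step, reassoc]
  have inner : ∀ p ∈ range (m + 1), ∀ a ∈ range (p + 1),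
      (∑ s ∈ range (m - p + 1), f a (m - p - s) * g (p - a) s)
      = (x ^ a / a.factorial * ((-1 : ℝ) ^ (p - a) * x ^ (p - a) / (p - a).factorial)) *
          (poch ((p : ℝ) - m + 1) (m - p) / (m - p).factorial) := by
    intro p hp a ha
    rw [mem_range] at hp ha
    have hterm : ∀ s ∈ range (m - p + 1), f a (m - p - s) * g (p - a) s
        = (x ^ a / a.factorial * ((-1 : ℝ) ^ (p - a) * x ^ (p - a) / (p - a).factorial)) *
          (poch (β + a + 1) (m - p - s) / (m - p - s).factorial *
            (poch (γ + ((p - a : ℕ) : ℝ) + 1) s / s.factorial)) := by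
      intro s _
      simp only [hf, hg]
      generalize poch (β + a + 1) (m - p - s) = P
      generalize poch (γ + ((p - a : ℕ) : ℝ) + 1) s = Q
      ring
    rw [sum_congr rfl hterm, ← mul_sum, vand]
    have harg : (β + a + 1) + (γ + ((p - a : ℕ) : ℝ) + 1) = (p : ℝ) - m + 1 := by
      have h1 : ((p - a : ℕ) : ℝ) = (p : ℝ) - a := by rw [Nat.cast_sub (by omega)]
      have h2 : (i : ℝ) = (j : ℝ) + m := by exact_mod_cast him
      rw [h1, hβ, hγ, h2]; ring
    rw [harg]
  rw [sum_congr rfl fun p hp => sum_congr rfl fun a ha => inner p hp a ha]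
  rw [sum_range_succ]
  have hzero : ∀ p ∈ range m, (∑ a ∈ range (p + 1),
      (x ^ a / a.factorial * ((-1 : ℝ) ^ (p - a) * x ^ (p - a) / (p - a).factorial)) *
        (poch ((p : ℝ) - m + 1) (m - p) / (m - p).factorial)) = 0 := by
    intro p hp
    rw [mem_range] at hp
    refine sum_eq_zero fun a _ => ?_
    rw [poch_vanish p m hp, zero_div, mul_zero]
  rw [sum_eq_zero hzero, zero_add]
  have hmm : ((m : ℝ) - m + 1) = 1 := by ring
  rw [hmm, Nat.sub_self, poch_zero]
  simp only [Nat.factorial_zero, Nat.cast_one, div_one, mul_one]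
  by_cases hm0 : m = 0
  · rw [if_pos (by omega), hm0]
    simp
  · rw [if_neg (by omega)]
    have key : ∀ a ∈ range (m + 1),
        x ^ a / a.factorial * ((-1 : ℝ) ^ (m - a) * x ^ (m - a) / (m - a).factorial)
        = ((-1 : ℝ) ^ a * (m.choose a : ℝ)) * ((-1 : ℝ) ^ m * x ^ m / m.factorial) := by
      intro a ha
      rw [mem_range] at ha
      have h1 : (m.choose a : ℝ) * a.factorial * (m - a).factorial = m.factorial := by
        exact_mod_cast Nat.choose_mul_factorial_mul_factorial (show a ≤ m by omega)
      have h2 : (-1 : ℝ) ^ (m - a) = (-1 : ℝ) ^ m * (-1 : ℝ) ^ a := by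
        rw [← pow_add, show m + a = (m - a) + 2 * a by omega, pow_add, pow_mul,
          neg_one_sq, one_pow, mul_one]
      have h3 : x ^ a * x ^ (m - a) = x ^ m := by
        rw [← pow_add, show a + (m - a) = m by omega]
      have ha' : (a.factorial : ℝ) ≠ 0 := Nat.cast_ne_zero.mpr a.factorial_ne_zero
      have hma : ((m - a).factorial : ℝ) ≠ 0 := Nat.cast_ne_zero.mpr (m - a).factorial_ne_zero
      have hmf : (m.factorial : ℝ) ≠ 0 := Nat.cast_ne_zero.mpr m.factorial_ne_zero
      rw [h2]
      field_simp
      rw [← h1, ← h3]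
      ring
    rw [sum_congr rfl key, ← sum_mul]
    have halt : (∑ a ∈ range (m + 1), ((-1 : ℝ) ^ a * (m.choose a : ℝ))) = 0 := by
      have h := Int.alternating_sum_range_choose_of_ne hm0
      have h' : ((∑ a ∈ range (m + 1), ((-1 : ℤ) ^ a * (m.choose a : ℤ)) : ℤ) : ℝ) = 0 := by
        rw [h]; norm_num
      push_cast at h'
      exact h'
    rw [halt, zero_mul]
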